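/- arXiv:math/0003114 — 2 statements merged into one kernel-verified Lean document; each statement's English description precedes it below -/
import Mathlib

section
/- For every real x with 0 < x < 20, f(2π/x) > ∑_{n=2}^∞ n·f(2πn²/x), where f(y) = (1/y)∫_y^∞ e^{-t}/t dt. -/
noncomputable def f (y : ℝ) : ℝ := (1 / y) * ∫ t in Set.Ioi y, Real.exp (-t) / t

open Real MeasureTheory Set

lemma exp_integrableOn (y : ℝ) : IntegrableOn (fun t : ℝ => exp (-t)) (Ioi y) := by
  simpa using exp_neg_integrableOn_Ioi y one_pos

lemma expdiv_integrableOn (y : ℝ) (hy : 0 < y) :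
    IntegrableOn (fun t => exp (-t) / t) (Ioi y) := by
  have hmeas : AEStronglyMeasurable (fun t => exp (-t) / t) (volume.restrict (Ioi y)) := by
    apply ContinuousOn.aestronglyMeasurable _ measurableSet_Ioi
    exact (Real.continuous_exp.comp continuous_neg).continuousOn.div
      continuousOn_id (fun t ht => (hy.trans ht).ne')
  refine ((exp_integrableOn y).div_const y).mono hmeas ?_
  filter_upwards [ae_restrict_mem measurableSet_Ioi] with t ht
  have htpos : 0 < t := hy.trans ht
  rw [Real.norm_eq_abs, Real.norm_eq_abs, abs_div, abs_div,
    abs_of_nonneg (exp_nonneg _), abs_of_pos htpos, abs_of_pos hy]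
  exact div_le_div_of_nonneg_left (exp_nonneg _) hy (le_of_lt ht)

lemma f_nonneg (y : ℝ) (hy : 0 < y) : 0 ≤ f y := by
  apply mul_nonneg (by positivity)
  apply setIntegral_nonneg measurableSet_Ioi
  intro t ht
  exact div_nonneg (exp_nonneg _) (hy.trans ht).le

lemma f_le (y : ℝ) (hy : 0 < y) : f y ≤ exp (-y) / y ^ 2 := by
  have h1 : (∫ t in Ioi y, exp (-t) / t) ≤ ∫ t in Ioi y, exp (-t) / y := by
    apply setIntegral_mono_on (expdiv_integrableOn y hy)
      ((exp_integrableOn y).div_const y) measurableSet_Ioi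
    intro t ht
    exact div_le_div_of_nonneg_left (exp_nonneg _) hy (le_of_lt ht)
  have h2 : (∫ t in Ioi y, exp (-t) / y) = exp (-y) / y := by
    rw [integral_div, integral_exp_neg_Ioi]
  calc f y ≤ (1 / y) * (exp (-y) / y) := by
        unfold f
        apply mul_le_mul_of_nonneg_left _ (by positivity)
        rw [← h2]; exact h1
    _ = exp (-y) / y ^ 2 := by field_simp

lemma f_ge (y : ℝ) (hy : 0 < y) : (exp (-y) - exp (-(2 * y))) / (2 * y ^ 2) ≤ f y := by
  have hIoc : IntegrableOn (fun t => exp (-t) / t) (Ioc y (2 * y)) :=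
    (expdiv_integrableOn y hy).mono_set Ioc_subset_Ioi_self
  have h1 : (∫ t in Ioc y (2 * y), exp (-t) / (2 * y)) ≤ ∫ t in Ioc y (2 * y), exp (-t) / t := by
    apply setIntegral_mono_on _ hIoc measurableSet_Ioc
    · intro t ht
      exact div_le_div_of_nonneg_left (exp_nonneg _) (hy.trans ht.1) ht.2
    · exact ((continuous_exp.comp continuous_neg).integrableOn_Ioc).div_const _
  have hI : (∫ t in Ioc y (2 * y), exp (-t)) = exp (-y) - exp (-(2 * y)) := by
    rw [← intervalIntegral.integral_of_le (by linarith : y ≤ 2 * y),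
      intervalIntegral.integral_comp_neg (fun x => Real.exp x), integral_exp]
  have h2 : (∫ t in Ioc y (2 * y), exp (-t) / (2 * y)) = (exp (-y) - exp (-(2 * y))) / (2 * y) := by
    rw [integral_div, hI]
  have h3 : (∫ t in Ioc y (2 * y), exp (-t) / t) ≤ ∫ t in Ioi y, exp (-t) / t := by
    apply setIntegral_mono_set (expdiv_integrableOn y hy)
    · filter_upwards [ae_restrict_mem measurableSet_Ioi] with t ht
      exact div_nonneg (exp_nonneg _) (hy.trans ht).le
    · exact HasSubset.Subset.eventuallyLE Ioc_subset_Ioi_self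
  calc (exp (-y) - exp (-(2 * y))) / (2 * y ^ 2)
      = (1 / y) * ((exp (-y) - exp (-(2 * y))) / (2 * y)) := by ring
    _ ≤ (1 / y) * ∫ t in Ioi y, exp (-t) / t := by
        apply mul_le_mul_of_nonneg_left _ (by positivity)
        rw [← h2]; exact h1.trans h3
    _ = f y := rfl

open Real in
theorem first_term_dominates (x : ℝ) (hx0 : 0 < x) (hx20 : x < 20) :
    ∑' n : ℕ, ((n : ℝ) + 2) * f (2 * π * ((n : ℝ) + 2) ^ 2 / x) < f (2 * π / x) := by
  have hπ := Real.pi_gt_d6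
  set a : ℝ := 2 * π / x with ha_def
  have ha : 0 < a := by rw [ha_def]; positivity
  have ha10 : π / 10 < a := by
    rw [ha_def, div_lt_div_iff₀ (by norm_num) hx0]
    nlinarith [pi_pos]
  set u : ℝ := exp (-a) with hu_def
  have hu0 : 0 < u := exp_pos _
  have hu1 : u < 1 := by
    rw [hu_def]
    calc exp (-a) < exp 0 := exp_lt_exp.2 (by linarith)
      _ = 1 := exp_zero
  have hu2 : u ≤ 20 / 27 := by
    have h4 : (1.0785 : ℝ) ^ 4 ≤ exp 0.314 := by
      rw [show (0.314 : ℝ) = (4 : ℕ) * 0.0785 by norm_num, Real.exp_nat_mul]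
      apply pow_le_pow_left₀ (by norm_num)
      nlinarith [Real.add_one_le_exp (0.0785 : ℝ)]
    have h5 : (27 / 20 : ℝ) ≤ exp a := by
      calc (27 / 20 : ℝ) ≤ 1.0785 ^ 4 := by norm_num
        _ ≤ exp 0.314 := h4
        _ ≤ exp a := exp_le_exp.2 (by nlinarith)
    rw [hu_def, exp_neg]
    calc (exp a)⁻¹ ≤ (27 / 20 : ℝ)⁻¹ := inv_anti₀ (by norm_num) h5
      _ = 20 / 27 := by norm_num
  have h1u2 : 0 < 1 - u ^ 2 := by nlinarith
  have harg : ∀ n : ℕ, 2 * π * ((n : ℝ) + 2) ^ 2 / x = a * ((n : ℝ) + 2) ^ 2 := by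
    intro n; rw [ha_def]; ring
  have hterm : ∀ n : ℕ, ((n : ℝ) + 2) * f (a * ((n : ℝ) + 2) ^ 2)
      ≤ (1 / (8 * a ^ 2)) * (u ^ 2) ^ (n + 2) := by
    intro n
    set m : ℝ := (n : ℝ) + 2 with hm_def
    have hm2 : (2 : ℝ) ≤ m := by
      rw [hm_def]; have := n.cast_nonneg (α := ℝ); linarith
    have hm0 : (0 : ℝ) < m := by linarith
    have hy : 0 < a * m ^ 2 := by positivity
    have h1 : m * f (a * m ^ 2) ≤ m * (exp (-(a * m ^ 2)) / (a * m ^ 2) ^ 2) :=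
      mul_le_mul_of_nonneg_left (f_le _ hy) (by linarith)
    have heq : m * (exp (-(a * m ^ 2)) / (a * m ^ 2) ^ 2) = exp (-(a * m ^ 2)) / (a ^ 2 * m ^ 3) := by
      field_simp
    have hexp : exp (-(a * m ^ 2)) ≤ exp (-(2 * a * m)) := exp_le_exp.2 (by nlinarith)
    have h2 : exp (-(a * m ^ 2)) / (a ^ 2 * m ^ 3) ≤ exp (-(2 * a * m)) / (8 * a ^ 2) := by
      apply div_le_div₀ (exp_pos _).le hexp (by positivity)
      have h8 : (8 : ℝ) ≤ m ^ 3 := by nlinarith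
      nlinarith [mul_le_mul_of_nonneg_left h8 (sq_nonneg a)]
    have h3 : ((u : ℝ) ^ 2) ^ (n + 2) = exp (-(2 * a * m)) := by
      rw [hu_def, ← pow_mul, ← Real.exp_nat_mul]
      congr 1
      rw [hm_def]; push_cast; ring
    rw [h3]
    calc m * f (a * m ^ 2) ≤ exp (-(a * m ^ 2)) / (a ^ 2 * m ^ 3) := heq ▸ h1
      _ ≤ exp (-(2 * a * m)) / (8 * a ^ 2) := h2
      _ = 1 / (8 * a ^ 2) * exp (-(2 * a * m)) := by ring
  have hgeo : Summable (fun n : ℕ => (u ^ 2) ^ n) :=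
    summable_geometric_of_lt_one (by positivity) (by nlinarith)
  have hgs : Summable (fun n : ℕ => (1 / (8 * a ^ 2)) * (u ^ 2) ^ (n + 2)) := by
    apply Summable.congr (hgeo.mul_left ((1 / (8 * a ^ 2)) * (u ^ 2) ^ 2))
    intro n; rw [pow_add]; ring
  have hfs : Summable (fun n : ℕ => ((n : ℝ) + 2) * f (a * ((n : ℝ) + 2) ^ 2)) := by
    apply Summable.of_nonneg_of_le _ hterm hgs
    intro n
    exact mul_nonneg (by positivity) (f_nonneg _ (by positivity))
  have hu2eq : u ^ 2 = exp (-(2 * a)) := by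
    rw [hu_def, sq, ← Real.exp_add]; congr 1; ring
  calc ∑' n : ℕ, ((n : ℝ) + 2) * f (2 * π * ((n : ℝ) + 2) ^ 2 / x)
      = ∑' n : ℕ, ((n : ℝ) + 2) * f (a * ((n : ℝ) + 2) ^ 2) := by
        congr 1; funext n; rw [harg n]
    _ ≤ ∑' n : ℕ, (1 / (8 * a ^ 2)) * (u ^ 2) ^ (n + 2) := Summable.tsum_le_tsum hterm hfs hgs
    _ = (1 / (8 * a ^ 2)) * (u ^ 2) ^ 2 * (1 - u ^ 2)⁻¹ := by
        rw [show (fun n : ℕ => (1 / (8 * a ^ 2)) * (u ^ 2) ^ (n + 2))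
            = fun n : ℕ => ((1 / (8 * a ^ 2)) * (u ^ 2) ^ 2) * (u ^ 2) ^ n from
          funext fun n => by rw [pow_add]; ring, tsum_mul_left,
          tsum_geometric_of_lt_one (by positivity) (by nlinarith), mul_assoc]
    _ < (u - u ^ 2) / (2 * a ^ 2) := by
        have hkey : u ^ 3 < 4 * (1 - u) * (1 - u ^ 2) := by
          nlinarith [mul_nonneg (sub_nonneg.2 hu2) hu0.le,
            mul_nonneg (mul_nonneg (sub_nonneg.2 hu2) hu0.le) hu0.le,
            sq_nonneg (u - 20 / 27)]
        have hEq : (1 / (8 * a ^ 2)) * (u ^ 2) ^ 2 * (1 - u ^ 2)⁻¹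
            = u ^ 4 / (8 * a ^ 2 * (1 - u ^ 2)) := by
          field_simp
        rw [hEq, div_lt_div_iff₀ (by positivity) (by positivity)]
        nlinarith [mul_lt_mul_of_pos_left hkey (show (0 : ℝ) < 2 * u * a ^ 2 by positivity)]
    _ ≤ f a := by
        have := f_ge a ha
        rw [← hu_def, ← hu2eq] at this
        exact this
end

section
/- The residue at s = 1 of the function (x/(2π))^s · Γ(s)/(s-1)² · ζ(4s-2)/ζ(2s-1) equals πx/6, for any real x > 0. -/
open Real in
theorem residue_at_one (x : ℝ) (hx : 0 < x) :
    Filter.Tendsto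
      (fun s : ℂ => (s - 1) * (((x / (2 * π) : ℝ) : ℂ) ^ s * Complex.Gamma s / (s - 1) ^ 2 *
        riemannZeta (4 * s - 2) / riemannZeta (2 * s - 1)))
      (nhdsWithin 1 {(1 : ℂ)}ᶜ)
      (nhds (((π : ℝ) : ℂ) * x / 6)) := by
  have hπ : (π : ℝ) ≠ 0 := Real.pi_ne_zero
  have hc : ((x / (2 * π) : ℝ) : ℂ) ≠ 0 := by
    simp only [ne_eq, Complex.ofReal_eq_zero]
    positivity
  -- the map s ↦ 2s - 1 sends 𝓝[≠]1 to 𝓝[≠]1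
  have hmap : Filter.Tendsto (fun s : ℂ => 2 * s - 1) (nhdsWithin 1 {(1:ℂ)}ᶜ)
      (nhdsWithin 1 {(1:ℂ)}ᶜ) := by
    apply Filter.Tendsto.inf
    · have : Filter.Tendsto (fun s : ℂ => 2 * s - 1) (nhds 1) (nhds (2 * 1 - 1)) :=
        ((continuous_const.mul continuous_id).sub continuous_const).tendsto 1
      norm_num at this
      exact this
    · refine Filter.tendsto_principal.mpr (Filter.eventually_principal.mpr ?_)
      intro s hs
      simp only [Set.mem_compl_iff, Set.mem_singleton_iff] at hs ⊢
      intro h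
      apply hs
      have : (2:ℂ) * s = 2 * 1 := by rw [mul_one]; linear_combination h
      exact mul_left_cancel₀ (two_ne_zero) this
  -- denominator piece : (s-1) * ζ(2s-1) → 1/2
  have t4 : Filter.Tendsto (fun s : ℂ => (s - 1) * riemannZeta (2 * s - 1))
      (nhdsWithin 1 {(1:ℂ)}ᶜ) (nhds (1/2)) := by
    have h1 := riemannZeta_residue_one.comp hmap
    have h2 := h1.const_mul (1/2 : ℂ)
    simp only [mul_one] at h2
    refine h2.congr (fun s => ?_)
    simp only [Function.comp]
    ring
  -- numerator : (x/2π)^s * Γ(s) * ζ(4s-2) → (x/2π) * 1 * ζ(2)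
  have t1 : Filter.Tendsto (fun s : ℂ => ((x / (2 * π) : ℝ) : ℂ) ^ s)
      (nhdsWithin 1 {(1:ℂ)}ᶜ) (nhds ((x / (2 * π) : ℝ) : ℂ)) := by
    have := (continuousAt_const_cpow (b := (1:ℂ)) hc).tendsto
    simpa [Complex.cpow_one] using this.mono_left nhdsWithin_le_nhds
  have t2 : Filter.Tendsto (fun s : ℂ => Complex.Gamma s)
      (nhdsWithin 1 {(1:ℂ)}ᶜ) (nhds 1) := by
    have h : ContinuousAt Complex.Gamma 1 := by
      apply (Complex.differentiableAt_Gamma 1 ?_).continuousAt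
      intro m
      intro h
      have : (0:ℝ) < 1 := one_pos
      have := congrArg Complex.re h
      simp at this
      nlinarith [Nat.cast_nonneg (α := ℝ) m]
    simpa [Complex.Gamma_one] using h.tendsto.mono_left nhdsWithin_le_nhds
  have t3 : Filter.Tendsto (fun s : ℂ => riemannZeta (4 * s - 2))
      (nhdsWithin 1 {(1:ℂ)}ᶜ) (nhds (riemannZeta 2)) := by
    have h : ContinuousAt riemannZeta 2 := (differentiableAt_riemannZeta (by norm_num)).continuousAt
    have hcomp : Filter.Tendsto (fun s : ℂ => 4 * s - 2) (nhds 1) (nhds 2) := by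
      have : Filter.Tendsto (fun s : ℂ => 4 * s - 2) (nhds 1) (nhds (4 * 1 - 2)) :=
        ((continuous_const.mul continuous_id).sub continuous_const).tendsto 1
      norm_num at this
      exact this
    exact (h.tendsto.comp hcomp).mono_left nhdsWithin_le_nhds
  have key : Filter.Tendsto
      (fun s : ℂ => ((x / (2 * π) : ℝ) : ℂ) ^ s * Complex.Gamma s * riemannZeta (4 * s - 2) *
        ((s - 1) * riemannZeta (2 * s - 1))⁻¹)
      (nhdsWithin 1 {(1:ℂ)}ᶜ)
      (nhds (((x / (2 * π) : ℝ) : ℂ) * 1 * riemannZeta 2 * ((1:ℂ)/2)⁻¹)) :=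
    ((t1.mul t2).mul t3).mul (t4.inv₀ (by norm_num))
  have hval : ((x / (2 * π) : ℝ) : ℂ) * 1 * riemannZeta 2 * ((1:ℂ)/2)⁻¹
      = ((π : ℝ) : ℂ) * x / 6 := by
    rw [riemannZeta_two]
    push_cast
    have hπc : ((π : ℝ) : ℂ) ≠ 0 := by exact_mod_cast Complex.ofReal_ne_zero.mpr hπ
    field_simp
  rw [hval] at key
  refine key.congr' ?_
  filter_upwards [self_mem_nhdsWithin] with s hs
  simp only [Set.mem_compl_iff, Set.mem_singleton_iff] at hs
  have h1 : s - 1 ≠ 0 := sub_ne_zero.mpr hs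
  have key2 : ∀ (a b c d : ℂ), (s - 1) * (a * b / (s - 1) ^ 2 * c / d) =
      a * b * c * ((s - 1) * d)⁻¹ := by
    intro a b c d
    rw [div_eq_mul_inv, div_eq_mul_inv, sq, mul_inv, mul_inv,
      show (s - 1) * (a * b * ((s - 1)⁻¹ * (s - 1)⁻¹) * c * d⁻¹) =
        ((s - 1) * (s - 1)⁻¹) * (a * b * c * ((s - 1)⁻¹ * d⁻¹)) from by ring,
      mul_inv_cancel₀ h1, one_mul]
  exact (key2 _ _ _ _).symm
end
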